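/- arXiv:2603.18608 — 4 statements merged into one kernel-verified Lean document; each statement's English description precedes it below -/
import Mathlib

section
/- There is no finite nonempty sequence μ₁, …, μ_r of probability mass functions on the symmetric group S₃, where each μ_i is either (a) a point mass δ_π for some permutation π ∈ S₃ (a deterministic permutation), (b) the uniform distribution on {id, τ} for some transposition τ ∈ S₃ (a 2-card scramble shuffle), or (c) the uniform distribution on all of S₃ (a 3-card scramble shuffle), such that the iterated convolution μ₁ * μ₂ * ⋯ * μ_r equals the uniform distribution on the set {id, (1 2 3), (1 3 2)}. -/
open Finset

variable {G : Type*} [Group G] [Fintype G] [DecidableEq G]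

/-- Convolution of two mass functions on a finite group:
`(μ * ν)(g) = ∑ h, μ(h) · ν(h⁻¹ g)`. -/
def convol (μ ν : G → ℝ) : G → ℝ := fun g => ∑ h : G, μ h * ν (h⁻¹ * g)

/-- Point mass `δ_π`. -/
def delta (π : G) : G → ℝ := fun g => if g = π then 1 else 0

/-- Uniform distribution on a finite subset `S`: probability `1/|S|` on each
element of `S` and `0` elsewhere. -/
noncomputable def unif (S : Finset G) : G → ℝ := fun g => if g ∈ S then (S.card : ℝ)⁻¹ else 0

/-- Iterated convolution `μ₁ * μ₂ * ⋯ * μ_r` of a list of mass functions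
(the empty list yields the point mass at the identity, a neutral element
for convolution). -/
noncomputable def convList (L : List (G → ℝ)) : G → ℝ := L.foldr convol (delta 1)

/-- `μ` is a probability mass function on the finite group `G`. -/
def IsPMF (μ : G → ℝ) : Prop := (∀ g, 0 ≤ μ g) ∧ ∑ g, μ g = 1

set_option linter.unusedSectionVars false

lemma delta_pmf (π : G) : IsPMF (delta π) := by
  constructor
  · intro g; unfold delta; split <;> norm_num
  · simp [delta]

lemma unif_pmf {S : Finset G} (hS : S.Nonempty) : IsPMF (unif S) := by
  have hc : (0:ℝ) < S.card := by exact_mod_cast Finset.card_pos.mpr hS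
  constructor
  · intro g; unfold unif; split
    · positivity
    · norm_num
  · rw [show (∑ g, unif S g) = ∑ g ∈ Finset.univ, if g ∈ S then (S.card:ℝ)⁻¹ else 0 from rfl,
      Finset.sum_ite_mem, Finset.univ_inter, Finset.sum_const, nsmul_eq_mul]
    field_simp

lemma convol_pmf {μ ν : G → ℝ} (hμ : IsPMF μ) (hν : IsPMF ν) : IsPMF (convol μ ν) := by
  constructor
  · intro g
    exact Finset.sum_nonneg fun h _ => mul_nonneg (hμ.1 h) (hν.1 _)
  · rw [show (∑ g, convol μ ν g) = ∑ h : G, μ h * ∑ g : G, ν (h⁻¹ * g) by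
      simp only [convol, Finset.mul_sum]; exact Finset.sum_comm]
    have : ∀ h : G, (∑ g : G, ν (h⁻¹ * g)) = 1 := by
      intro h
      exact (Fintype.sum_equiv (Equiv.mulLeft h⁻¹) _ ν (fun g => rfl)).trans hν.2
    simp only [this, mul_one]
    exact hμ.2

lemma convol_unif_univ_right {μ : G → ℝ} (hμ : IsPMF μ) :
    convol μ (unif Finset.univ) = unif Finset.univ := by
  funext g
  simp only [convol, unif, Finset.mem_univ, if_true, ← Finset.sum_mul, hμ.2, one_mul]

lemma convol_unif_univ_left (ν : G → ℝ) (hν : IsPMF ν) :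
    convol (unif Finset.univ) ν = unif Finset.univ := by
  funext g
  simp only [convol, unif, Finset.mem_univ, if_true]
  rw [← Finset.mul_sum]
  have h1 : (∑ i : G, ν (i⁻¹ * g)) = ∑ i : G, ν i :=
    Fintype.sum_equiv ((Equiv.inv G).trans (Equiv.mulRight g)) _ ν (fun h => rfl)
  rw [h1, hν.2, mul_one]

lemma convList_pmf {L : List (G → ℝ)} (h : ∀ μ ∈ L, IsPMF μ) : IsPMF (convList L) := by
  induction L with
  | nil => exact delta_pmf 1
  | cons μ L ih =>
    exact convol_pmf (h μ (by simp)) (ih fun ν hν => h ν (by simp [hν]))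

lemma convList_univ {L : List (G → ℝ)} (h : ∀ μ ∈ L, IsPMF μ)
    (hU : unif (Finset.univ : Finset G) ∈ L) : convList L = unif Finset.univ := by
  induction L with
  | nil => simp at hU
  | cons μ L ih =>
    show convol μ (convList L) = _
    rcases List.mem_cons.mp hU with h1 | h2
    · rw [← h1]
      exact convol_unif_univ_left _ (convList_pmf fun ν hν => h ν (by simp [hν]))
    · rw [ih (fun ν hν => h ν (by simp [hν])) h2]
      exact convol_unif_univ_right (h μ (by simp))

def Dy (x : ℝ) : Prop := ∃ (m : ℤ) (k : ℕ), x * 2 ^ k = m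

lemma Dy.add {x y : ℝ} (hx : Dy x) (hy : Dy y) : Dy (x + y) := by
  obtain ⟨m, a, hm⟩ := hx
  obtain ⟨n, b, hn⟩ := hy
  refine ⟨m * 2 ^ b + n * 2 ^ a, a + b, ?_⟩
  push_cast
  rw [pow_add]
  linear_combination (2:ℝ) ^ b * hm + (2:ℝ) ^ a * hn

lemma Dy.mul {x y : ℝ} (hx : Dy x) (hy : Dy y) : Dy (x * y) := by
  obtain ⟨m, a, hm⟩ := hx
  obtain ⟨n, b, hn⟩ := hy
  refine ⟨m * n, a + b, ?_⟩
  push_cast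
  rw [pow_add]
  linear_combination (y * 2 ^ b) * hm + (m : ℝ) * hn

lemma Dy.zero : Dy (0 : ℝ) := ⟨0, 0, by norm_num⟩
lemma Dy.one : Dy (1 : ℝ) := ⟨1, 0, by norm_num⟩
lemma Dy.half : Dy ((2 : ℝ)⁻¹) := ⟨1, 1, by norm_num⟩

lemma convList_dy {L : List (G → ℝ)} (h : ∀ μ ∈ L, ∀ g, Dy (μ g)) :
    ∀ g, Dy (convList L g) := by
  induction L with
  | nil =>
    intro g
    show Dy (delta 1 g)
    unfold delta; split
    · exact Dy.one
    · exact Dy.zero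
  | cons μ L ih =>
    intro g
    show Dy (∑ h : G, μ h * convList L (h⁻¹ * g))
    refine Finset.sum_induction _ Dy (fun a b => Dy.add) Dy.zero ?_
    intro i _
    exact Dy.mul (h μ (by simp) i) (ih (fun ν hν => h ν (by simp [hν])) _)

lemma not_dy_third : ¬ Dy ((3 : ℝ)⁻¹) := by
  rintro ⟨m, k, hm⟩
  have h3 : (2 : ℝ) ^ k = 3 * m := by
    field_simp at hm
    linarith [hm]
  have hz : (2 : ℤ) ^ k = 3 * m := by exact_mod_cast h3
  have : (3 : ℤ) ∣ 2 ^ k := ⟨m, hz⟩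
  have := (Int.Prime.dvd_pow' (p := 3) (by norm_num) this)
  omega

/-- The shuffle `{id, (1 2 3), (1 3 2)}` (a random cut on 3 cards) cannot be
realized by any finite nonempty sequence of deterministic permutations,
2-card scramble shuffles, and 3-card scramble shuffles on `S₃`. -/
theorem stmt0 :
    ¬ ∃ L : List (Equiv.Perm (Fin 3) → ℝ), L ≠ [] ∧
      (∀ μ ∈ L,
        (∃ π : Equiv.Perm (Fin 3), μ = delta π) ∨
        (∃ τ : Equiv.Perm (Fin 3), τ.IsSwap ∧ μ = unif {1, τ}) ∨
        μ = unif (Finset.univ : Finset (Equiv.Perm (Fin 3)))) ∧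
      convList L = unif {1, finRotate 3, finRotate 3 ^ 2} := by
  classical
  rintro ⟨L, -, hforms, hconv⟩
  have hcard : ({1, finRotate 3, finRotate 3 ^ 2} : Finset (Equiv.Perm (Fin 3))).card = 3 := by
    decide
  have hmem1 : (1 : Equiv.Perm (Fin 3)) ∈
      ({1, finRotate 3, finRotate 3 ^ 2} : Finset (Equiv.Perm (Fin 3))) := by simp
  have htarget : unif ({1, finRotate 3, finRotate 3 ^ 2} : Finset (Equiv.Perm (Fin 3))) 1
      = (3 : ℝ)⁻¹ := by
    rw [unif, if_pos hmem1, hcard]; norm_num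
  have hpmf : ∀ μ ∈ L, IsPMF μ := by
    intro μ hμ
    rcases hforms μ hμ with ⟨π, rfl⟩ | ⟨τ, _, rfl⟩ | rfl
    · exact delta_pmf π
    · exact unif_pmf ⟨1, by simp⟩
    · exact unif_pmf ⟨1, by simp⟩
  by_cases hU : unif (Finset.univ : Finset (Equiv.Perm (Fin 3))) ∈ L
  · have h := convList_univ hpmf hU
    rw [hconv] at h
    have h1 := congrFun h 1
    rw [htarget, unif, if_pos (Finset.mem_univ _)] at h1
    have hc6 : (Finset.univ : Finset (Equiv.Perm (Fin 3))).card = 6 := by decide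
    rw [hc6] at h1
    norm_num at h1
  · have hdy : ∀ μ ∈ L, ∀ g, Dy (μ g) := by
      intro μ hμ g
      rcases hforms μ hμ with ⟨π, rfl⟩ | ⟨τ, _, rfl⟩ | rfl
      · unfold delta; split
        · exact Dy.one
        · exact Dy.zero
      · unfold unif; split
        · rcases eq_or_ne τ 1 with rfl | hne
          · have hcs : (({1, (1 : Equiv.Perm (Fin 3))} : Finset _)).card = 1 := by simp
            rw [hcs]
            exact ⟨1, 0, by norm_num⟩
          · rw [Finset.card_insert_of_notMem (by simpa using hne.symm),
              Finset.card_singleton]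
            exact ⟨1, 1, by norm_num⟩
        · exact Dy.zero
      · exact absurd hμ hU
    have hd := convList_dy hdy 1
    rw [hconv, htarget] at hd
    exact not_dy_third hd
end

section
/- There is no finite nonempty sequence μ₁, …, μ_r of probability mass functions on the symmetric group S₄, where each μ_i is either (a) a point mass δ_π for some permutation π ∈ S₄ (a deterministic permutation), (b) the uniform distribution on {id, τ} for some transposition τ ∈ S₄ (a 2-card random cut), (c) the uniform distribution on {id, c, c²} for some 3-cycle c ∈ S₄ (a 3-card random cut), or (d) the uniform distribution on {id, σ, σ², σ³} for some 4-cycle σ ∈ S₄ (a 4-card random cut), such that the iterated convolution μ₁ * μ₂ * ⋯ * μ_r equals the uniform distribution on the set {id, (1 2)(3 4)}. -/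
/-!
Two invariants of convolution rule out such a factorization. The sign character turns
convolution into multiplication: the target shuffle has sign average `1`, while 2-card and
4-card cuts have sign average `0`, so only point masses and 3-card cuts can occur. But these
take values in `ℤ[1/3]`, a ring closed under convolution, whereas the target takes the
value `1/2`.
-/

open Finset

variable {G : Type*} [Group G] [Fintype G] [DecidableEq G]

section CharSum

variable {Γ : Type*} [Group Γ] [Fintype Γ] (χ : Γ →* ℝ)

def charSum (μ : Γ → ℝ) : ℝ := ∑ g, μ g * χ g

theorem charSum_convol (μ ν : Γ → ℝ) :
    charSum χ (convol μ ν) = charSum χ μ * charSum χ ν := by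
  have hinner (h : Γ) : ∑ g, ν (h⁻¹ * g) * χ g = χ h * ∑ k, ν k * χ k := by
    have hχ : χ h * χ h⁻¹ = 1 := by rw [← map_mul, mul_inv_cancel, map_one]
    rw [mul_sum]
    refine Fintype.sum_equiv (Equiv.mulLeft h⁻¹) _ _ fun g => ?_
    simp only [Equiv.coe_mulLeft, map_mul]
    linear_combination -(ν (h⁻¹ * g) * χ g) * hχ
  simp only [charSum, convol, sum_mul, mul_assoc]
  rw [sum_comm]
  simp only [← mul_sum, hinner]

variable [DecidableEq Γ]

theorem charSum_delta (π : Γ) : charSum χ (delta π) = χ π := by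
  simp [charSum, delta]

theorem charSum_convList (L : List (Γ → ℝ)) :
    charSum χ (convList L) = (L.map (charSum χ)).prod := by
  induction L with
  | nil => simp [convList, charSum_delta]
  | cons μ L ih => rw [List.map_cons, List.prod_cons, ← ih, ← charSum_convol]; rfl

theorem charSum_unif (S : Finset Γ) : charSum χ (unif S) = (#S : ℝ)⁻¹ * ∑ g ∈ S, χ g := by
  simp only [charSum, unif, ite_mul, zero_mul, sum_ite_mem, univ_inter, mul_sum]

theorem charSum_unif_of_forall_eq_one {S : Finset Γ} (hS : S.Nonempty) (h : ∀ g ∈ S, χ g = 1) :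
    charSum χ (unif S) = 1 := by
  rw [charSum_unif, sum_congr rfl h, sum_const, nsmul_one,
    inv_mul_cancel₀ (Nat.cast_ne_zero.mpr hS.card_ne_zero)]

/-- Left multiplication by `σ` permutes `S`, and `χ σ = -1` makes the sum over `S` its own
negative. -/
theorem charSum_unif_eq_zero {S : Finset Γ} {σ : Γ} (hσ : χ σ = -1)
    (hS : ∀ g ∈ S, σ * g ∈ S) : charSum χ (unif S) = 0 := by
  have himage : S.image (σ * ·) = S :=
    eq_of_subset_of_card_le (image_subset_iff.mpr hS)
      (card_image_of_injective _ (mul_right_injective σ)).ge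
  have hsum : ∑ g ∈ S, χ g = -∑ g ∈ S, χ g := by
    conv_lhs => rw [← himage]
    rw [sum_image fun a _ b _ h => mul_left_cancel h, neg_eq_neg_one_mul, mul_sum]
    simp [hσ]
  rw [charSum_unif, show ∑ g ∈ S, χ g = 0 by linarith, mul_zero]

end CharSum

section Cuts

variable {M : Type*} [Group M] [DecidableEq M]

theorem mul_mem_pair_of_mul_self_eq_one {τ : M} (h : τ * τ = 1) :
    ∀ g ∈ ({1, τ} : Finset M), τ * g ∈ ({1, τ} : Finset M) := by
  simp [h]

theorem mul_mem_powers_of_pow_four_eq_one {σ : M} (h : σ ^ 4 = 1) :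
    ∀ g ∈ ({1, σ, σ ^ 2, σ ^ 3} : Finset M), σ * g ∈ ({1, σ, σ ^ 2, σ ^ 3} : Finset M) := by
  simp only [mem_insert, mem_singleton, forall_eq_or_imp, forall_eq, mul_one,
    ← pow_succ', h]
  simp [pow_succ]

theorem card_powers_of_orderOf_eq_three {c : M} (hc : orderOf c = 3) :
    #({1, c, c ^ 2} : Finset M) = 3 := by
  have hinj : Set.InjOn (c ^ ·) (Set.Iio 3) := hc ▸ pow_injOn_Iio_orderOf
  have h01 : c ^ 0 ≠ c ^ 1 := hinj.ne (by simp) (by simp) (by decide)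
  have h02 : c ^ 0 ≠ c ^ 2 := hinj.ne (by simp) (by simp) (by decide)
  have h12 : c ^ 1 ≠ c ^ 2 := hinj.ne (by simp) (by simp) (by decide)
  rw [pow_zero, pow_one] at *
  rw [card_insert_of_notMem (by simp [h01, h02]), card_insert_of_notMem (by simp [h12]),
    card_singleton]

end Cuts

def Equiv.Perm.signReal {α : Type*} [DecidableEq α] [Fintype α] : Equiv.Perm α →* ℝ :=
  ((Int.castRingHom ℝ : ℤ →* ℝ).comp (Units.coeHom ℤ)).comp Equiv.Perm.sign

@[simp]
theorem Equiv.Perm.signReal_apply {α : Type*} [DecidableEq α] [Fintype α] (σ : Equiv.Perm α) :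
    σ.signReal = ((Equiv.Perm.sign σ : ℤ) : ℝ) := rfl

/-- `ℤ[1/n]` as a subring of `ℝ`. -/
def intAdjoinInv (n : ℕ) : Subring ℝ where
  carrier := {x | ∃ b : ℕ, ∃ k : ℤ, x * n ^ b = k}
  zero_mem' := ⟨0, 0, by simp⟩
  one_mem' := ⟨0, 1, by simp⟩
  neg_mem' := by
    rintro x ⟨b, k, h⟩
    exact ⟨b, -k, by push_cast; linear_combination -h⟩
  add_mem' := by
    rintro x y ⟨a, k, hk⟩ ⟨b, l, hl⟩
    refine ⟨a + b, k * n ^ b + l * n ^ a, ?_⟩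
    push_cast
    linear_combination (n : ℝ) ^ b * hk + (n : ℝ) ^ a * hl
  mul_mem' := by
    rintro x y ⟨a, k, hk⟩ ⟨b, l, hl⟩
    refine ⟨a + b, k * l, ?_⟩
    push_cast
    linear_combination (y * n ^ b) * hk + (k : ℝ) * hl

theorem inv_mem_intAdjoinInv (n : ℕ) : (n : ℝ)⁻¹ ∈ intAdjoinInv n := by
  rcases eq_or_ne n 0 with rfl | hn
  · simp [(intAdjoinInv 0).zero_mem]
  · exact ⟨1, 1, by simp [hn]⟩

theorem inv_two_notMem_intAdjoinInv {n : ℕ} (hn : Odd n) : (2 : ℝ)⁻¹ ∉ intAdjoinInv n := by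
  rintro ⟨b, k, h⟩
  have hpow : (n : ℤ) ^ b = 2 * k := by
    exact_mod_cast (show ((n : ℤ) ^ b : ℝ) = (2 * k : ℤ) by push_cast; linear_combination 2 * h)
  have heven : Even ((n : ℤ) ^ b) := ⟨k, by rw [hpow]; ring⟩
  exact Int.not_even_iff_odd.mpr ((Int.odd_coe_nat n).mpr hn).pow heven

section ValuesIn

variable {Γ : Type*} (R : Subring ℝ)

theorem convol_mem [Group Γ] [Fintype Γ] {μ ν : Γ → ℝ} (hμ : ∀ g, μ g ∈ R)
    (hν : ∀ g, ν g ∈ R) (g : Γ) : convol μ ν g ∈ R :=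
  R.sum_mem fun h _ => R.mul_mem (hμ h) (hν _)

variable [DecidableEq Γ]

theorem delta_mem (π g : Γ) : delta π g ∈ R := by
  unfold delta
  split_ifs
  exacts [R.one_mem, R.zero_mem]

theorem unif_mem {S : Finset Γ} (hS : (#S : ℝ)⁻¹ ∈ R) (g : Γ) : unif S g ∈ R := by
  unfold unif
  split_ifs
  exacts [hS, R.zero_mem]

theorem convList_mem [Group Γ] [Fintype Γ] {L : List (Γ → ℝ)} (hL : ∀ μ ∈ L, ∀ g, μ g ∈ R)
    (g : Γ) : convList L g ∈ R := by
  induction L generalizing g with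
  | nil => exact delta_mem R 1 g
  | cons μ L ih =>
    exact convol_mem R (hL μ List.mem_cons_self)
      (ih fun ν hν => hL ν (List.mem_cons_of_mem μ hν)) g

end ValuesIn

/-- The shuffle `{id, (1 2)(3 4)}` cannot be realized by any finite nonempty
sequence of deterministic permutations and 2-, 3-, or 4-card random cuts
on `S₄`. -/
theorem stmt1 :
    ¬ ∃ L : List (Equiv.Perm (Fin 4) → ℝ), L ≠ [] ∧
      (∀ μ ∈ L,
        (∃ π : Equiv.Perm (Fin 4), μ = delta π) ∨
        (∃ τ : Equiv.Perm (Fin 4), τ.IsSwap ∧ μ = unif {1, τ}) ∨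
        (∃ c : Equiv.Perm (Fin 4), c.IsThreeCycle ∧ μ = unif {1, c, c ^ 2}) ∨
        (∃ σ : Equiv.Perm (Fin 4), σ.IsCycle ∧ σ.support.card = 4 ∧
          μ = unif {1, σ, σ ^ 2, σ ^ 3})) ∧
      convList L = unif {1, Equiv.swap (0 : Fin 4) 1 * Equiv.swap (2 : Fin 4) 3} := by
  rintro ⟨L, -, hL, hconv⟩
  have hprod : (L.map (charSum Equiv.Perm.signReal)).prod = 1 := by
    rw [← charSum_convList, hconv]
    exact charSum_unif_of_forall_eq_one _ (insert_nonempty _ _) (by simp)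
  have hne (μ) (hμ : μ ∈ L) : charSum Equiv.Perm.signReal μ ≠ 0 := fun h =>
    one_ne_zero (hprod ▸ List.prod_eq_zero (h ▸ List.mem_map_of_mem (f := charSum _) hμ))
  have hvalues : ∀ μ ∈ L, ∀ g, μ g ∈ intAdjoinInv 3 := by
    intro μ hμ
    rcases hL μ hμ with ⟨π, rfl⟩ | ⟨τ, hτ, rfl⟩ | ⟨c, hc, rfl⟩ | ⟨σ, hσ, hσ4, rfl⟩
    · exact delta_mem _ π
    · refine absurd (charSum_unif_eq_zero _ (σ := τ) (by simp [hτ.sign_eq]) ?_) (hne _ hμ)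
      obtain ⟨a, b, -, rfl⟩ := hτ
      exact mul_mem_pair_of_mul_self_eq_one (Equiv.swap_mul_self a b)
    · refine unif_mem _ ?_
      rw [card_powers_of_orderOf_eq_three hc.orderOf]
      exact_mod_cast inv_mem_intAdjoinInv 3
    · refine absurd (charSum_unif_eq_zero _ (σ := σ) (by simp [hσ.sign, hσ4]) ?_) (hne _ hμ)
      exact mul_mem_powers_of_pow_four_eq_one (by simpa [hσ.orderOf, hσ4] using pow_orderOf_eq_one σ)
  have hhalf := convList_mem _ hvalues 1
  rw [hconv, unif, if_pos (mem_insert_self _ _),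
    show #({1, Equiv.swap (0 : Fin 4) 1 * Equiv.swap 2 3} : Finset (Equiv.Perm (Fin 4))) = 2
      by decide] at hhalf
  exact inv_two_notMem_intAdjoinInv (n := 3) (by decide) (by exact_mod_cast hhalf)
end

section
/- For n ≥ 2, let σ_i = (1 2 … i) ∈ S_n for 2 ≤ i ≤ n, and let ν_i denote the uniform distribution on the cyclic subgroup ⟨σ_i⟩ = {id, σ_i, σ_i², …, σ_i^{i-1}}. Then the iterated convolution ν_n * ν_{n-1} * ⋯ * ν_2 equals the uniform distribution on all of S_n. (Thus the scramble shuffle on n cards can be realized by a sequence of random cuts on 2, 3, …, n cards.) -/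
open Finset

variable {G : Type*} [Group G] [Fintype G] [DecidableEq G]

/-!
Let `H k` be the group of permutations of `Fin n` fixing every point `≥ k`, so `H 0 = 1` and
`H n = S_n`. With `σ_{k+1} = (0 1 … k)`, every element of `H (k + 1)` factors uniquely as
`σ_{k+1} ^ a * h` with `a ≤ k` and `h ∈ H k`: the exponent `a` is read off from the image
of `k`, since `h` fixes `k`. For sets with unique factorization, the product of independent
uniform elements is uniform on the product set, so by induction on `k` the convolution of the
uniform distributions on `⟨σ_k⟩, …, ⟨σ_1⟩` is uniform on `H k`. The dropped factor
`⟨σ_1⟩ = 1` contributes the point mass `δ_1`, the unit of convolution.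
-/

open Equiv

theorem convList_cons (μ : G → ℝ) (L : List (G → ℝ)) :
    convList (μ :: L) = convol μ (convList L) :=
  rfl

theorem delta_one_convol (μ : G → ℝ) : convol (delta 1) μ = μ := by
  funext g
  simp [convol, delta]

theorem convList_dropLast {L : List (G → ℝ)} (hL : ∀ μ ∈ L.getLast?, μ = delta 1) :
    convList L.dropLast = convList L := by
  obtain rfl | ⟨L, μ, rfl⟩ := L.eq_nil_or_concat
  · rfl
  obtain rfl : μ = delta 1 := hL μ (by simp)
  simp only [List.concat_eq_append, List.dropLast_concat, convList, List.foldr_append,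
    List.foldr_cons, List.foldr_nil, delta_one_convol]

omit [Fintype G] in
theorem unif_singleton_one : unif ({1} : Finset G) = delta 1 := by
  funext g
  simp [unif, delta]

open Pointwise in
theorem convol_unif_unif {S T : Finset G}
    (hST : Set.InjOn (fun p : G × G => p.1 * p.2) ((S : Set G) ×ˢ (T : Set G))) :
    convol (unif S) (unif T) = unif (S * T) := by
  funext g
  simp only [convol, unif]
  by_cases hg : g ∈ S * T
  · obtain ⟨s, hs, t, ht, rfl⟩ := Finset.mem_mul.mp hg
    have hunique : ∀ h ∈ S, h⁻¹ * (s * t) ∈ T → h = s := fun h h1 h2 =>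
      congrArg Prod.fst <| hST (show (h, h⁻¹ * (s * t)) ∈ (S : Set G) ×ˢ (T : Set G) from ⟨h1, h2⟩)
        (show (s, t) ∈ (S : Set G) ×ˢ (T : Set G) from ⟨hs, ht⟩) (by simp)
    rw [if_pos hg, Finset.card_mul_iff.mpr hST, Finset.sum_eq_single s]
    · simp [hs, ht, mul_comm]
    · intro h _ hhs
      by_cases hS : h ∈ S
      · rw [if_pos hS, if_neg fun hT => hhs (hunique h hS hT), mul_zero]
      · simp [hS]
    · simp
  · rw [if_neg hg]
    refine Finset.sum_eq_zero fun h _ => ?_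
    by_cases hS : h ∈ S
    · rw [if_pos hS, if_neg fun hT => hg (by simpa using Finset.mul_mem_mul hS hT), mul_zero]
    · simp [hS]

namespace Fin

variable {n : ℕ}

theorem cycleRange_pow_apply_of_gt {i j : Fin n} (h : i < j) (a : ℕ) :
    (cycleRange i ^ a) j = j :=
  Perm.pow_apply_eq_self_of_apply_eq_self (cycleRange_of_gt h) a

theorem coe_cycleRange_pow_apply_of_le {i j : Fin n} (h : j ≤ i) (a : ℕ) :
    ((cycleRange i ^ a) j : ℕ) = (j + a) % (i + 1) := by
  induction a with
  | zero => simp [Nat.mod_eq_of_lt (Nat.lt_succ_of_le h)]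
  | succ a ih =>
    have hle : (cycleRange i ^ a) j ≤ i := Nat.le_of_lt_succ (ih ▸ Nat.mod_lt _ (by omega))
    rw [pow_succ', Perm.mul_apply, coe_cycleRange_of_le hle, ← Nat.add_assoc,
      ← Nat.mod_add_mod, ← ih]
    split_ifs with hi
    · simp [hi]
    · have : ((cycleRange i ^ a) j : ℕ) < i := Fin.lt_def.mp (lt_of_le_of_ne hle hi)
      rw [Nat.mod_eq_of_lt (by omega)]

theorem cycleRange_pow_self_injOn (i : Fin n) :
    Set.InjOn (fun a => (cycleRange i ^ a) i) (Set.Iio (i + 1 : ℕ)) := by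
  intro a ha b hb hab
  have := congrArg Fin.val hab
  simp only [coe_cycleRange_pow_apply_of_le le_rfl] at this
  exact (Nat.ModEq.add_left_cancel' _ this).eq_of_lt_of_lt ha hb

theorem exists_cycleRange_pow_self_eq {i j : Fin n} (h : j ≤ i) :
    ∃ a < (i + 1 : ℕ), (cycleRange i ^ a) i = j := by
  refine ⟨(j + 1) % (i + 1), Nat.mod_lt _ (by omega), Fin.ext ?_⟩
  rw [coe_cycleRange_pow_apply_of_le le_rfl, Nat.add_mod_mod,
    show (i : ℕ) + (j + 1) = j + (i + 1) by omega, Nat.add_mod_right,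
    Nat.mod_eq_of_lt (by omega)]

end Fin

def permsBelow (n k : ℕ) : Finset (Perm (Fin n)) := {g | ∀ j : Fin n, k ≤ (j : ℕ) → g j = j}

section CycleFactorization

variable {n : ℕ}

def cyclePowers (i : Fin n) : Finset (Perm (Fin n)) :=
  (Finset.range (i.val + 1)).image (fun j => Fin.cycleRange i ^ j)

theorem mem_permsBelow {k : ℕ} {g : Perm (Fin n)} :
    g ∈ permsBelow n k ↔ ∀ j : Fin n, k ≤ (j : ℕ) → g j = j := by
  simp [permsBelow]

theorem permsBelow_zero : permsBelow n 0 = {1} := by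
  ext g
  simp [mem_permsBelow, Perm.ext_iff]

theorem permsBelow_self : permsBelow n n = univ := by
  ext g
  simp only [mem_permsBelow, mem_univ, iff_true]
  exact fun j hj => absurd j.isLt (by omega)

theorem val_apply_lt_of_mem_permsBelow {k : ℕ} {g : Perm (Fin n)} (hg : g ∈ permsBelow n k)
    {j : Fin n} (hj : (j : ℕ) < k) : (g j : ℕ) < k := by
  by_contra! h
  have : g j = j := g.injective (mem_permsBelow.mp hg _ h)
  omega

open Pointwise in
theorem cyclePowers_mul_permsBelow (i : Fin n) :
    cyclePowers i * permsBelow n i = permsBelow n (i + 1) := by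
  ext g
  simp only [Finset.mem_mul, cyclePowers, Finset.mem_image, Finset.mem_range]
  constructor
  · rintro ⟨_, ⟨a, -, rfl⟩, h, hh, rfl⟩
    refine mem_permsBelow.mpr fun j hj => ?_
    rw [Perm.mul_apply, mem_permsBelow.mp hh j (by omega),
      Fin.cycleRange_pow_apply_of_gt (Fin.lt_def.mpr hj)]
  · intro hg
    have hgi : g i ≤ i := Nat.le_of_lt_succ (val_apply_lt_of_mem_permsBelow hg (by omega))
    obtain ⟨a, ha, hai⟩ := Fin.exists_cycleRange_pow_self_eq hgi
    refine ⟨_, ⟨a, ha, rfl⟩, (Fin.cycleRange i ^ a)⁻¹ * g, mem_permsBelow.mpr fun j hj => ?_,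
      mul_inv_cancel_left _ _⟩
    rw [Perm.mul_apply, Perm.inv_eq_iff_eq]
    rcases hj.lt_or_eq with hj | hj
    · rw [mem_permsBelow.mp hg j hj, Fin.cycleRange_pow_apply_of_gt (Fin.lt_def.mpr hj)]
    · rw [Fin.ext hj.symm, hai]

theorem injOn_mul_cyclePowers_permsBelow (i : Fin n) :
    Set.InjOn (fun p : Perm (Fin n) × Perm (Fin n) => p.1 * p.2)
      ((cyclePowers i : Set (Perm (Fin n))) ×ˢ (permsBelow n i : Set (Perm (Fin n)))) := by
  rintro ⟨_, h⟩ ⟨hx, hh⟩ ⟨_, h'⟩ ⟨hy, hh'⟩ heq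
  obtain ⟨a, ha, rfl⟩ := Finset.mem_image.mp hx
  obtain ⟨b, hb, rfl⟩ := Finset.mem_image.mp hy
  have hi : (Fin.cycleRange i ^ a) i = (Fin.cycleRange i ^ b) i := by
    simpa [mem_permsBelow.mp hh i le_rfl, mem_permsBelow.mp hh' i le_rfl] using
      congrArg (· i) heq
  obtain rfl := Fin.cycleRange_pow_self_injOn i (Finset.mem_range.mp ha)
    (Finset.mem_range.mp hb) hi
  simpa using heq

theorem convList_take_cyclePowers {k : ℕ} (hk : k ≤ n) :
    convList (((List.finRange n).take k).reverse.map (unif ∘ cyclePowers)) =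
      unif (permsBelow n k) := by
  induction k with
  | zero => rw [permsBelow_zero, unif_singleton_one]; rfl
  | succ k ih =>
    have hget : (List.finRange n)[k]? = some ⟨k, hk⟩ := by
      rw [List.getElem?_eq_getElem (by simpa using hk), List.getElem_finRange, Fin.cast_mk]
    rw [List.take_add_one, hget]
    simp only [Option.toList_some, List.reverse_append, List.reverse_singleton,
      List.singleton_append, List.map_cons, Function.comp_apply, convList_cons, ih (by omega)]
    rw [convol_unif_unif (injOn_mul_cyclePowers_permsBelow _), cyclePowers_mul_permsBelow]

end CycleFactorization

theorem stmt11_general (n : ℕ) :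
    convList (((List.finRange n).reverse.map
      (fun i : Fin n => unif ((Finset.range (i.val + 1)).image
        (fun j => Fin.cycleRange i ^ j)))).dropLast)
    = unif (Finset.univ : Finset (Equiv.Perm (Fin n))) := by
  rw [convList_dropLast, ← permsBelow_self, ← convList_take_cyclePowers le_rfl,
    List.take_of_length_le (by simp)]
  · rfl
  · cases n with
    | zero => simp
    | succ m => simp [List.getLast?_reverse, List.finRange_succ, unif_singleton_one]

/-- The iterated convolution `ν_n * ν_{n-1} * ⋯ * ν_2`, where `ν_i` is the
uniform distribution on the cyclic subgroup generated by `σ_i = (1 2 … i)`,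
equals the uniform distribution on all of `S_n`.  Here `Fin.cycleRange i`
(for `i : Fin n`) is the cycle `(0 1 … i)` of length `i+1`, so `σ_i`
corresponds to `Fin.cycleRange` of the element of value `i - 1`; `dropLast`
removes the trivial factor corresponding to `σ_1 = id`. -/
theorem stmt11 (n : ℕ) (hn : 2 ≤ n) :
    convList (((List.finRange n).reverse.map
      (fun i : Fin n => unif ((Finset.range (i.val + 1)).image
        (fun j => Fin.cycleRange i ^ j)))).dropLast)
    = unif (Finset.univ : Finset (Equiv.Perm (Fin n))) :=
  stmt11_general n
end

section
/- There is no finite nonempty sequence μ₁, …, μ_r of probability mass functions on the symmetric group S₃, where each μ_i is either (a) a point mass δ_π for some permutation π ∈ S₃, (b) the uniform distribution on {id, τ} for some transposition τ ∈ S₃, or (c) the uniform distribution on all of S₃, such that the iterated convolution μ₁ * μ₂ * ⋯ * μ_r equals the uniform distribution on the set of all three transpositions {(1 2), (1 3), (2 3)}. -/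
open Finset

variable {G : Type*} [Group G] [Fintype G] [DecidableEq G]

/-- Real-valued sign of a permutation of `Fin 3`. -/
def sgn (g : Equiv.Perm (Fin 3)) : ℝ := ((Equiv.Perm.sign g : ℤ) : ℝ)

lemma sgn_mul (a b : Equiv.Perm (Fin 3)) : sgn (a * b) = sgn a * sgn b := by
  simp [sgn, map_mul, Units.val_mul]

/-- Sign sum of a mass function. -/
noncomputable def phi (μ : Equiv.Perm (Fin 3) → ℝ) : ℝ := ∑ g, μ g * sgn g

lemma phi_convol (μ ν : Equiv.Perm (Fin 3) → ℝ) :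
    phi (convol μ ν) = phi μ * phi ν := by
  unfold phi convol
  simp only [Finset.sum_mul]
  rw [Finset.sum_comm]
  refine Finset.sum_congr rfl fun h _ => ?_
  rw [mul_comm (μ h * sgn h), Finset.sum_mul]
  rw [← Equiv.sum_comp (Equiv.mulLeft h) (fun x => μ h * ν (h⁻¹ * x) * sgn x)]
  refine Finset.sum_congr rfl fun k _ => ?_
  simp only [Equiv.coe_mulLeft, inv_mul_cancel_left, sgn_mul]
  ring

lemma phi_delta (π : Equiv.Perm (Fin 3)) : phi (delta π) = sgn π := by
  simp [phi, delta, ite_mul, Finset.sum_ite_eq']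

lemma convol_delta (a b : Equiv.Perm (Fin 3)) :
    convol (delta a) (delta b) = delta (a * b) := by
  funext g
  simp only [convol, delta, ite_mul, one_mul, zero_mul, Finset.sum_ite_eq',
    Finset.mem_univ, if_true]
  congr 1
  simp only [eq_iff_iff]
  constructor <;> rintro rfl <;> group

lemma phi_convList (L : List (Equiv.Perm (Fin 3) → ℝ)) :
    phi (convList L) = (L.map phi).prod := by
  induction L with
  | nil => simp [convList, phi_delta, sgn]
  | cons a t ih =>
    simp only [convList, List.foldr_cons, List.map_cons, List.prod_cons]
    rw [show (List.foldr convol (delta 1) t) = convList t from rfl] at *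
    rw [phi_convol, ih]

lemma phi_unif (S : Finset (Equiv.Perm (Fin 3))) :
    phi (unif S) = (S.card : ℝ)⁻¹ * ∑ g ∈ S, sgn g := by
  simp [phi, unif, ite_mul, Finset.mul_sum, ← Finset.sum_filter, Finset.filter_mem_eq_inter]

lemma sgn_swap (a b : Fin 3) (h : a ≠ b) : sgn (Equiv.swap a b) = -1 := by
  simp [sgn, Equiv.Perm.sign_swap h]

lemma sgn_one : sgn (1 : Equiv.Perm (Fin 3)) = 1 := by simp [sgn]

lemma sum_sgn_univ : ∑ g : Equiv.Perm (Fin 3), sgn g = 0 := by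
  have h : (∑ g : Equiv.Perm (Fin 3), ((Equiv.Perm.sign g : ℤ))) = 0 := by decide
  unfold sgn
  rw [← Int.cast_sum, h, Int.cast_zero]

lemma delta_list (M : List (Equiv.Perm (Fin 3) → ℝ))
    (h : ∀ μ ∈ M, ∃ π, μ = delta π) : ∃ π, convList M = delta π := by
  induction M with
  | nil => exact ⟨1, rfl⟩
  | cons a t ih =>
    obtain ⟨π, rfl⟩ := h a (by simp)
    obtain ⟨ρ, hρ⟩ := ih (fun μ hμ => h μ (by simp [hμ]))
    exact ⟨π * ρ, by
      rw [show convList (delta π :: t) = convol (delta π) (convList t) from rfl, hρ,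
        convol_delta]⟩

/-- The shuffle on the three transpositions of `S₃` cannot be realized by any
finite nonempty sequence of deterministic permutations, 2-card scramble
shuffles, and 3-card scramble shuffles. -/
theorem stmt14 :
    ¬ ∃ L : List (Equiv.Perm (Fin 3) → ℝ), L ≠ [] ∧
      (∀ μ ∈ L,
        (∃ π : Equiv.Perm (Fin 3), μ = delta π) ∨
        (∃ τ : Equiv.Perm (Fin 3), τ.IsSwap ∧ μ = unif {1, τ}) ∨
        μ = unif (Finset.univ : Finset (Equiv.Perm (Fin 3)))) ∧
      convList L = unif {Equiv.swap (0 : Fin 3) 1, Equiv.swap (0 : Fin 3) 2,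
        Equiv.swap (1 : Fin 3) 2} := by
  rintro ⟨L, -, hmem, hconv⟩
  set S : Finset (Equiv.Perm (Fin 3)) :=
    {Equiv.swap 0 1, Equiv.swap 0 2, Equiv.swap 1 2} with hS
  have hcard : S.card = 3 := by decide
  have htphi : phi (unif S) = -1 := by
    rw [phi_unif, hcard]
    have hsum : ∑ g ∈ S, sgn g = -3 := by
      rw [hS, Finset.sum_insert (by decide), Finset.sum_insert (by decide),
        Finset.sum_singleton, sgn_swap _ _ (by decide), sgn_swap _ _ (by decide),
        sgn_swap _ _ (by decide)]
      norm_num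
    rw [hsum]; norm_num
  have hprod : (L.map phi).prod = -1 := by
    rw [← phi_convList, hconv, htphi]
  have hnz : ∀ μ ∈ L, phi μ ≠ 0 := by
    intro μ hμ h0
    have : (L.map phi).prod = 0 := List.prod_eq_zero (List.mem_map.mpr ⟨μ, hμ, h0⟩)
    rw [hprod] at this; norm_num at this
  have hall : ∀ μ ∈ L, ∃ π, μ = delta π := by
    intro μ hμ
    rcases hmem μ hμ with h | ⟨τ, hτ, rfl⟩ | rfl
    · exact h
    · exfalso
      apply hnz _ hμ
      have hτ1 : (1 : Equiv.Perm (Fin 3)) ≠ τ := by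
        obtain ⟨a, b, hab, rfl⟩ := hτ
        exact fun h => hab ((Equiv.swap_eq_one_iff).mp h.symm)
      have hsτ : sgn τ = -1 := by
        obtain ⟨a, b, hab, rfl⟩ := hτ; exact sgn_swap _ _ hab
      rw [phi_unif, Finset.sum_pair hτ1, sgn_one, hsτ]
      ring
    · exfalso
      apply hnz _ hμ
      rw [phi_unif, sum_sgn_univ, mul_zero]
  obtain ⟨π, hπ⟩ := delta_list L hall
  rw [hπ] at hconv
  have := congrFun hconv π
  simp only [delta, if_pos rfl, unif, hcard] at this
  split_ifs at this <;> norm_num at this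
end
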